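/- For any random variables and conditioning as in the Poisson posterior setup, the derivative of the k-th central moment decomposes as: μ_k'(y) = −k μ₁'(y) μ_{k−1}(y) + μ_{k+1}(y) for k ≥ 3, which combined with μ₂ = μ₁' yields the recursion μ_{k+1} = μ_k' + k μ₂ μ_{k−1}. -/

import Mathlib

open MeasureTheory Set

/-- digamma function ψ = (log Γ)' -/
noncomputable def digamma (t : ℝ) : ℝ := deriv (fun s => Real.log (Real.Gamma s)) t

/-- Poisson likelihood continuously extended to real observations. -/
noncomputable def plik (x y : ℝ) : ℝ := x ^ y * Real.exp (-x) / Real.Gamma (y + 1)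

/-- marginal density of the observation -/
noncomputable def marg (px : ℝ → ℝ) (t : ℝ) : ℝ := ∫ x in Set.Ioi (0:ℝ), plik x t * px x

/-- posterior expectation E[f(x) | y = t] -/
noncomputable def postExp (px : ℝ → ℝ) (f : ℝ → ℝ) (t : ℝ) : ℝ :=
  (∫ x in Set.Ioi (0:ℝ), f x * plik x t * px x) / marg px t

/-- k-th posterior central moment of log x -/
noncomputable def cmom (px : ℝ → ℝ) (k : ℕ) (t : ℝ) : ℝ :=
  (∫ x in Set.Ioi (0:ℝ), (Real.log x - postExp px Real.log t) ^ k * plik x t * px x) / marg px t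

/-!
Write `g_s(x) = plik x s * px x` and `L = log x`. Since `∂_s plik x s = plik x s * (L - ψ(s + 1))`,
differentiating the numerator `N_k(s) = ∫ (L - μ₁ s)^k g_s` under the integral sign gives
`N_k' = -k μ₁' N_{k-1} + N_{k+1} + (μ₁ - ψ(y + 1)) N_k`, while the marginal satisfies
`M' = (μ₁ - ψ(y + 1)) M`. In the quotient `μ_k = N_k / M` the two score terms cancel.
-/

theorem HasDerivAt.div_of_hasDerivAt_mul_self {N M : ℝ → ℝ} {A c y : ℝ}
    (hN : HasDerivAt N (A + c * N y) y) (hM : HasDerivAt M (c * M y) y) (hM0 : M y ≠ 0) :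
    HasDerivAt (N / M) (A / M y) y :=
  (hN.div hM hM0).congr_deriv (by field_simp; ring)

theorem MeasureTheory.Integrable.sub_pow_mul {α : Type*} [MeasurableSpace α] {μ : Measure α}
    {f w : α → ℝ} (hf : AEStronglyMeasurable f μ)
    (h : ∀ k : ℕ, Integrable (fun x => |f x| ^ k * w x) μ) (a : ℝ) (j : ℕ) :
    Integrable (fun x => (f x - a) ^ j * w x) μ := by
  have hw : AEStronglyMeasurable w μ := by simpa using (h 0).aestronglyMeasurable
  have hpow : ∀ i : ℕ, Integrable (fun x => f x ^ i * w x) μ := fun i =>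
    (h i).mono ((hf.pow i).mul hw) (ae_of_all _ fun x => by simp)
  have hbinom : (fun x => (f x - a) ^ j * w x)
      = fun x => ∑ i ∈ Finset.range (j + 1), (-a) ^ (j - i) * j.choose i * (f x ^ i * w x) := by
    funext x
    rw [sub_eq_add_neg, add_pow, Finset.sum_mul]
    exact Finset.sum_congr rfl fun i _ => by ring
  rw [hbinom]
  exact integrable_finsetSum _ fun i _ => (hpow i).const_mul _

theorem hasDerivAt_plik {x y : ℝ} (hx : 0 < x) (hΓ : Real.Gamma (y + 1) ≠ 0) :
    HasDerivAt (plik x) (plik x y * (Real.log x - digamma (y + 1))) y := by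
  have hΓd : DifferentiableAt ℝ Real.Gamma (y + 1) :=
    Real.differentiableAt_Gamma fun m h => hΓ ((Real.Gamma_eq_zero_iff _).2 ⟨m, h⟩)
  have hG : HasDerivAt (fun s => Real.Gamma (s + 1)) (deriv Real.Gamma (y + 1)) y := by
    simpa using hΓd.hasDerivAt.comp_add_const y 1
  have hψ : digamma (y + 1) = deriv Real.Gamma (y + 1) / Real.Gamma (y + 1) :=
    (hΓd.hasDerivAt.log hΓ).deriv
  have hnum : HasDerivAt (fun s => x ^ s * Real.exp (-x)) (x ^ y * Real.log x * Real.exp (-x)) y :=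
    (Real.hasStrictDerivAt_const_rpow hx y).hasDerivAt.mul_const _
  refine (hnum.div hG hΓ).congr_deriv ?_
  rw [plik, hψ]
  field_simp

noncomputable def cmomNum (px : ℝ → ℝ) (k : ℕ) (t : ℝ) : ℝ :=
  ∫ x in Ioi (0:ℝ), (Real.log x - postExp px Real.log t) ^ k * plik x t * px x

theorem cmom_eq_div (px : ℝ → ℝ) (k : ℕ) : cmom px k = cmomNum px k / marg px :=
  rfl

section Posterior

variable {px : ℝ → ℝ} {y : ℝ}

theorem integrableOn_log_sub_pow_mul_plik
    (hint : ∀ k : ℕ, IntegrableOn (fun x => |Real.log x| ^ k * plik x y * px x) (Ioi 0))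
    (a : ℝ) (j : ℕ) :
    IntegrableOn (fun x => (Real.log x - a) ^ j * plik x y * px x) (Ioi 0) := by
  simpa only [mul_assoc, IntegrableOn] using
    Integrable.sub_pow_mul Real.measurable_log.aestronglyMeasurable
      (fun k => by simpa only [mul_assoc, IntegrableOn] using hint k) a j

theorem integral_log_sub_mul_plik (hM : marg px y ≠ 0)
    (hint : ∀ k : ℕ, IntegrableOn (fun x => |Real.log x| ^ k * plik x y * px x) (Ioi 0))
    (c : ℝ) :
    ∫ x in Ioi (0:ℝ), (Real.log x - c) * plik x y * px x
      = (postExp px Real.log y - c) * marg px y := by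
  have hlog := integrableOn_log_sub_pow_mul_plik hint 0 1
  have hlik := integrableOn_log_sub_pow_mul_plik hint 0 0
  simp only [sub_zero, pow_one, pow_zero, one_mul] at hlog hlik
  have hsplit : (fun x => (Real.log x - c) * plik x y * px x)
      = fun x => Real.log x * plik x y * px x - c * (plik x y * px x) := by
    funext x
    ring
  have hmean : ∫ x in Ioi (0:ℝ), Real.log x * plik x y * px x
      = postExp px Real.log y * marg px y :=
    (div_mul_cancel₀ _ hM).symm
  rw [hsplit, integral_sub hlog (hlik.const_mul c), integral_const_mul, hmean, sub_mul]
  rfl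

theorem integral_deriv_cmomNum_integrand (hΓ : Real.Gamma (y + 1) ≠ 0)
    (hint : ∀ k : ℕ, IntegrableOn (fun x => |Real.log x| ^ k * plik x y * px x) (Ioi 0))
    (hμ : DifferentiableAt ℝ (postExp px Real.log) y) (k : ℕ) :
    ∫ x in Ioi (0:ℝ),
        deriv (fun s => (Real.log x - postExp px Real.log s) ^ k * plik x s * px x) y
      = -(k : ℝ) * deriv (postExp px Real.log) y * cmomNum px (k - 1) y + cmomNum px (k + 1) y
          + (postExp px Real.log y - digamma (y + 1)) * cmomNum px k y := by
  set μ₁ := postExp px Real.log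
  have hderiv : ∀ x ∈ Ioi (0:ℝ),
      deriv (fun s => (Real.log x - μ₁ s) ^ k * plik x s * px x) y
        = -(k : ℝ) * deriv μ₁ y * ((Real.log x - μ₁ y) ^ (k - 1) * plik x y * px x)
          + (Real.log x - μ₁ y) ^ (k + 1) * plik x y * px x
          + (μ₁ y - digamma (y + 1)) * ((Real.log x - μ₁ y) ^ k * plik x y * px x) := by
    intro x hx
    have h : HasDerivAt (fun s => (Real.log x - μ₁ s) ^ k * plik x s * px x) _ y :=
      (((hμ.hasDerivAt.const_sub _).pow k).mul (hasDerivAt_plik hx hΓ)).mul_const _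
    rw [h.deriv, Pi.pow_apply, pow_succ]
    ring
  have hI := integrableOn_log_sub_pow_mul_plik hint (μ₁ y)
  rw [setIntegral_congr_fun measurableSet_Ioi hderiv, integral_add, integral_add,
    integral_const_mul, integral_const_mul]
  · rfl
  all_goals first
    | exact hI _
    | exact (hI _).const_mul _
    | exact ((hI _).const_mul _).add (hI _)

end Posterior

theorem poisson_moment_deriv_decomposition_general (px : ℝ → ℝ)
    (y : ℝ) (hy : -1 < y)
    (hpos : 0 < marg px y)
    (hint : ∀ k : ℕ, IntegrableOn (fun x => |Real.log x| ^ k * plik x y * px x) (Set.Ioi 0))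
    -- differentiation under the integral sign for the marginal:
    (hmargD : HasDerivAt (marg px)
      (∫ x in Set.Ioi (0:ℝ), (Real.log x - digamma (y + 1)) * plik x y * px x) y)
    -- mu_1 is differentiable:
    (hmu1D : DifferentiableAt ℝ (postExp px Real.log) y)
    -- differentiation under the integral sign for every centered moment:
    (hDUI : ∀ j : ℕ, HasDerivAt
      (fun s => ∫ x in Set.Ioi (0:ℝ),
        (Real.log x - postExp px Real.log s) ^ j * plik x s * px x)
      (∫ x in Set.Ioi (0:ℝ),
        deriv (fun s => (Real.log x - postExp px Real.log s) ^ j * plik x s * px x) y) y) :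
    ∀ k : ℕ, 3 ≤ k →
      deriv (cmom px k) y
        = -(k : ℝ) * deriv (postExp px Real.log) y * cmom px (k - 1) y
            + cmom px (k + 1) y ∧
      (deriv (postExp px Real.log) y = cmom px 2 y →
        cmom px (k + 1) y
          = deriv (cmom px k) y + (k : ℝ) * cmom px 2 y * cmom px (k - 1) y) := by
  intro k _
  have hΓ : Real.Gamma (y + 1) ≠ 0 := (Real.Gamma_pos_of_pos (by linarith)).ne'
  have hM : marg px y ≠ 0 := hpos.ne'
  have hmarg : HasDerivAt (marg px) ((postExp px Real.log y - digamma (y + 1)) * marg px y) y := by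
    rwa [← integral_log_sub_mul_plik hM hint]
  have hnum : HasDerivAt (cmomNum px k) _ y := hDUI k
  rw [integral_deriv_cmomNum_integrand hΓ hint hmu1D] at hnum
  have hcmom : HasDerivAt (cmom px k)
      (-(k : ℝ) * deriv (postExp px Real.log) y * cmom px (k - 1) y + cmom px (k + 1) y) y :=
    (hnum.div_of_hasDerivAt_mul_self hmarg hM).congr_deriv (by rw [add_div, mul_div_assoc]; rfl)
  exact ⟨hcmom.deriv, fun h2 => by rw [hcmom.deriv, ← h2]; ring⟩

/-- Decomposition of the derivative of the k-th posterior central moment: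
mu_k'(y) = -k mu_1'(y) mu_{k-1}(y) + mu_{k+1}(y) for k >= 3, which combined with
mu_2 = mu_1' yields mu_{k+1} = mu_k' + k mu_2 mu_{k-1}. -/
theorem poisson_moment_deriv_decomposition (px : ℝ → ℝ)
    (hnn : ∀ x ∈ Set.Ioi (0:ℝ), 0 ≤ px x)
    (y : ℝ) (hy : -1 < y)
    (hpos : 0 < marg px y)
    (hint : ∀ k : ℕ, IntegrableOn (fun x => |Real.log x| ^ k * plik x y * px x) (Set.Ioi 0))
    -- differentiation under the integral sign for the marginal:
    (hmargD : HasDerivAt (marg px)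
      (∫ x in Set.Ioi (0:ℝ), (Real.log x - digamma (y + 1)) * plik x y * px x) y)
    -- mu_1 is differentiable:
    (hmu1D : DifferentiableAt ℝ (postExp px Real.log) y)
    -- differentiation under the integral sign for every centered moment:
    (hDUI : ∀ j : ℕ, HasDerivAt
      (fun s => ∫ x in Set.Ioi (0:ℝ),
        (Real.log x - postExp px Real.log s) ^ j * plik x s * px x)
      (∫ x in Set.Ioi (0:ℝ),
        deriv (fun s => (Real.log x - postExp px Real.log s) ^ j * plik x s * px x) y) y) :
    ∀ k : ℕ, 3 ≤ k →
      deriv (cmom px k) y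
        = -(k : ℝ) * deriv (postExp px Real.log) y * cmom px (k - 1) y
            + cmom px (k + 1) y ∧
      (deriv (postExp px Real.log) y = cmom px 2 y →
        cmom px (k + 1) y
          = deriv (cmom px k) y + (k : ℝ) * cmom px 2 y * cmom px (k - 1) y) :=
  poisson_moment_deriv_decomposition_general px y hy hpos hint hmargD hmu1D hDUI
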